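/- Let m ≥ 1, n ≥ 2 and let (a,u), (b,v) ∈ G = ℤ^m × F_n. There exists an endomorphism Ψ of G with Ψ(a,u) = (b,v) if and only if the following two conditions both hold: (1) either there exists an endomorphism φ of F_n with φ(u) = v, or there exist w ∈ F_n with w ≠ 1 and w not a proper power, l ∈ ℤ^m with l ≠ 0, and h ∈ ℤ^n with v = w^{a·lᵀ + ū·hᵀ}; and (2) there exist an m×m integer matrix Q and an n×m integer matrix P with aQ + ūP = b. -/

import Mathlib

open Matrix

/-- The abelianization vector (vector of exponent sums of the generators)
of an element of the free group `F_n`. -/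
def abVec {n : ℕ} (u : FreeGroup (Fin n)) : Fin n → ℤ :=
  Multiplicative.toAdd ((FreeGroup.lift fun i => Multiplicative.ofAdd (Pi.single i (1 : ℤ))) u)

/-- The free-abelian times free group `G = ℤ^m × F_n`. -/
abbrev GFab (m n : ℕ) := Multiplicative (Fin m → ℤ) × FreeGroup (Fin n)


/-!
A homomorphism from `ℤ^m × F_n` to an abelian group factors through `ℤ^m × ℤ^n`; this gives
condition (2) and the shape of the exponent in (1). For the `F_n`-component `ψ` of an endomorphism:
if `ψ (a, 1) = 1` then `ψ (a, u) = ψ (1, u)` comes from an endomorphism of `F_n`. Otherwise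
`c = ψ (a, 1) ≠ 1` commutes with the whole image of `ψ`. The centralizer of `c` is free
(Nielsen–Schreier) with `c` in its centre, and a free group with nontrivial centre has at most one
generator, so the centralizer is `⟨w⟩` with `w` not a proper power. Hence `ψ = w ^ χ` for a
homomorphism `χ` to `ℤ`, and `χ (a, u) = a·l + ū·h`.
-/

open Multiplicative Subgroup

theorem FreeGroup.isCyclic_of_subsingleton {X : Type*} [Subsingleton X] :
    IsCyclic (FreeGroup X) := by
  rcases isEmpty_or_nonempty X with hX | hX
  · exact _root_.isCyclic_of_subsingleton
  · obtain ⟨x₀⟩ := id hX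
    refine isCyclic_iff_exists_zpowers_eq_top.mpr ⟨FreeGroup.of x₀, ?_⟩
    rw [zpowers_eq_closure, ← FreeGroup.closure_range_of]
    congr
    exact (Set.range_eq_singleton_iff.mpr fun x => by rw [Subsingleton.elim x x₀]).symm

namespace IsFreeGroup

variable {G : Type*} [Group G] [IsFreeGroup G]

theorem eq_of_commute_of {a b : Generators G} (h : Commute (of a) (of b)) : a = b := by
  classical
  by_contra hab
  let σ : Generators G → Equiv.Perm (Fin 3) :=
    fun x => if x = a then Equiv.swap 0 1 else Equiv.swap 1 2
  have := (h.map (lift σ)).eq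
  simp only [lift_of, σ, if_neg (Ne.symm hab)] at this
  revert this
  decide

theorem isCyclic_of_subsingleton_generators [Subsingleton (Generators G)] : IsCyclic G :=
  have := FreeGroup.isCyclic_of_subsingleton (X := Generators G)
  isCyclic_of_surjective (toFreeGroup G).symm (toFreeGroup G).symm.surjective

theorem isCyclic_of_isMulCommutative [IsMulCommutative G] : IsCyclic G :=
  have : Subsingleton (Generators G) := ⟨fun _ _ => eq_of_commute_of (mul_comm' _ _)⟩
  isCyclic_of_subsingleton_generators

theorem exists_mem_zpowers_of_commute {x y : G} (h : Commute x y) :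
    ∃ g : G, x ∈ zpowers g ∧ y ∈ zpowers g := by
  -- `closure {x, y}` is free by the instance `subgroupIsFreeOfIsFree` (Nielsen–Schreier).
  have : IsMulCommutative (closure {x, y}) := isMulCommutative_closure <| by
    rintro _ (rfl | rfl) _ (rfl | rfl)
    exacts [rfl, h.eq, h.symm.eq, rfl]
  have := isCyclic_of_isMulCommutative (G := closure {x, y})
  obtain ⟨g, hg⟩ := IsCyclic.exists_generator (α := closure {x, y})
  have hmem (z) (hz : z ∈ closure {x, y}) : z ∈ zpowers (g : G) := by
    obtain ⟨k, hk⟩ := mem_zpowers_iff.mp (hg ⟨z, hz⟩)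
    exact mem_zpowers_iff.mpr ⟨k, by simpa using congrArg Subtype.val hk⟩
  exact ⟨g, hmem x (subset_closure (by simp)), hmem y (subset_closure (by simp))⟩

theorem exists_zpow_eq_zpow_of_commute {x y : G} (h : Commute x y) (hx : x ≠ 1) :
    ∃ p r : ℤ, p ≠ 0 ∧ y ^ p = x ^ r := by
  obtain ⟨g, ⟨p, rfl⟩, ⟨r, rfl⟩⟩ := exists_mem_zpowers_of_commute h
  refine ⟨p, r, fun hp => hx (by simp [hp]), ?_⟩
  rw [← _root_.zpow_mul, ← _root_.zpow_mul, mul_comm]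

theorem isCyclic_of_mem_center {z : G} (hz : z ≠ 1) (hc : z ∈ center G) : IsCyclic G := by
  suffices Subsingleton (Generators G) from isCyclic_of_subsingleton_generators
  refine ⟨fun i j => by_contra fun hij => ?_⟩
  classical
  -- Nonzero powers of `of i` and of `of j` are both powers of `z`; the exponent sums in `i`
  -- and in `j` cannot both allow that.
  let χ (k : Generators G) : G →* Multiplicative ℤ := lift (Pi.mulSingle k (.ofAdd 1))
  have hχ (k x : Generators G) : (χ k (of x)).toAdd = if x = k then 1 else 0 := by
    by_cases hxk : x = k <;> simp [χ, hxk]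
  have hcomm (k : Generators G) := mem_center_iff.mp hc (of k)
  obtain ⟨p, r, hp, hpr⟩ := exists_zpow_eq_zpow_of_commute (hcomm i).symm hz
  obtain ⟨p', r', hp', hpr'⟩ := exists_zpow_eq_zpow_of_commute (hcomm j).symm hz
  have hχi_i := congrArg (fun g => (χ i g).toAdd) hpr
  have hχi_j := congrArg (fun g => (χ i g).toAdd) hpr'
  have hχj_j := congrArg (fun g => (χ j g).toAdd) hpr'
  simp only [map_zpow, toAdd_zpow, hχ, if_pos, if_neg (Ne.symm hij), smul_eq_mul]
    at hχi_i hχi_j hχj_j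
  have hχi_z : (χ i z).toAdd ≠ 0 := fun h => hp (by simpa [h] using hχi_i)
  have hr' : r' = 0 := by simpa [hχi_z] using hχi_j.symm
  exact hp' (by simpa [hr'] using hχj_j)

theorem exists_centralizer_eq_zpowers {c : G} (hc : c ≠ 1) :
    ∃ w : G, centralizer {c} = zpowers w := by
  -- `centralizer {c}` is free by Nielsen–Schreier as well.
  let c' : centralizer {c} := ⟨c, mem_centralizer_singleton_iff.mpr rfl⟩
  have : IsCyclic (centralizer {c}) := isCyclic_of_mem_center (z := c')
    (fun h => hc (congrArg Subtype.val h))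
    (mem_center_iff.mpr fun g => Subtype.ext (mem_centralizer_singleton_iff.mp g.2))
  obtain ⟨w, hw⟩ := (centralizer {c}).isCyclic_iff_exists_zpowers_eq_top.mp this
  exact ⟨w, hw.symm⟩

end IsFreeGroup

def IsProperPower {M : Type*} [Monoid M] (w : M) : Prop :=
  ∃ (z : M) (k : ℕ), 2 ≤ k ∧ w = z ^ k

section TorsionFree

variable {G : Type*} [Group G] [IsMulTorsionFree G]

theorem not_isProperPower_of_centralizer_eq_zpowers {c w : G} (hc : c ≠ 1)
    (h : centralizer {c} = zpowers w) : ¬ IsProperPower w := by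
  rintro ⟨z, k, hk, rfl⟩
  have hc_mem : c ∈ zpowers (z ^ k) := h ▸ mem_centralizer_singleton_iff.mpr rfl
  obtain ⟨t, rfl⟩ := mem_zpowers_iff.mp hc_mem
  have hz_mem : z ∈ zpowers (z ^ k) :=
    h ▸ mem_centralizer_singleton_iff.mpr (((Commute.refl z).pow_right k).zpow_right t).eq
  obtain ⟨j, hj⟩ := mem_zpowers_iff.mp hz_mem
  have hz : z ≠ 1 := by rintro rfl; simp at hc
  have hkj : z ^ ((k : ℤ) * j - 1) = 1 := by
    rw [_root_.zpow_sub_one, _root_.zpow_mul, zpow_natCast, hj, mul_inv_cancel]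
  have := Int.eq_one_of_mul_eq_one_right (by positivity)
    (sub_eq_zero.mp ((IsMulTorsionFree.zpow_eq_one_iff_right hz).mp hkj))
  omega

theorem exists_monoidHom_eq_zpow {H : Type*} [Group H] (f : H →* G) {w : G} (hw : w ≠ 1)
    (hf : ∀ g, f g ∈ zpowers w) : ∃ χ : H →* Multiplicative ℤ, ∀ g, f g = w ^ (χ g).toAdd := by
  let e := zpowersHom G w
  have he : Function.Injective e :=
    injective_zpow_iff_not_isOfFinOrder.mpr (not_isOfFinOrder_of_isMulTorsionFree hw)
  have hrange (g : H) : f g ∈ e.range := by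
    obtain ⟨t, ht⟩ := mem_zpowers_iff.mp (hf g)
    exact ⟨.ofAdd t, ht⟩
  exact ⟨(MonoidHom.ofInjective he).symm.toMonoidHom.comp (f.codRestrict e.range hrange),
    fun g => (MonoidHom.apply_ofInjective_symm he ⟨f g, hrange g⟩).symm⟩

end TorsionFree

theorem exists_monoidHom_prod_apply_eq_iff {H A B : Type*} [MulOneClass H] [MulOneClass A]
    [MulOneClass B] (g : H) (x : A) (y : B) :
    (∃ Ψ : H →* A × B, Ψ g = (x, y)) ↔ (∃ f : H →* A, f g = x) ∧ ∃ f : H →* B, f g = y := by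
  constructor
  · rintro ⟨Ψ, hΨ⟩
    exact ⟨⟨(MonoidHom.fst A B).comp Ψ, by simp [hΨ]⟩,
      ⟨(MonoidHom.snd A B).comp Ψ, by simp [hΨ]⟩⟩
  · rintro ⟨⟨f, rfl⟩, ⟨f', rfl⟩⟩
    exact ⟨f.prod f', rfl⟩

def abVecHom (n : ℕ) : FreeGroup (Fin n) →* Multiplicative (Fin n → ℤ) :=
  FreeGroup.lift fun i => ofAdd (Pi.single i 1)

variable {m n : ℕ}

namespace GFab

variable {M : Type*} [AddCommGroup M]

def lift (p : Fin m → M) (q : Fin n → M) : GFab m n →* Multiplicative M :=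
  (Fintype.linearCombination ℤ p).toAddMonoidHom.toMultiplicative.coprod
    ((Fintype.linearCombination ℤ q).toAddMonoidHom.toMultiplicative.comp (abVecHom n))

theorem toAdd_lift_apply (p : Fin m → M) (q : Fin n → M) (a : Fin m → ℤ)
    (u : FreeGroup (Fin n)) :
    (lift p q (ofAdd a, u)).toAdd = ∑ i, a i • p i + ∑ j, abVec u j • q j :=
  rfl

theorem eq_lift (χ : GFab m n →* Multiplicative M) :
    χ = lift (fun i => (χ (ofAdd (Pi.single i 1), 1)).toAdd)
      (fun j => (χ (1, .of j)).toAdd) := by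
  rw [← χ.coprod_unique]
  congr 1
  · apply AddMonoidHom.toMultiplicative.symm.injective
    ext i
    simp
  · ext j
    simp [abVecHom]

theorem toAdd_lift_apply_eq_dotProduct (l : Fin m → ℤ) (h : Fin n → ℤ) (a : Fin m → ℤ)
    (u : FreeGroup (Fin n)) : (lift l h (ofAdd a, u)).toAdd = a ⬝ᵥ l + abVec u ⬝ᵥ h := by
  simp [toAdd_lift_apply, dotProduct]

theorem toAdd_lift_apply_eq_vecMul {k : ℕ} (p : Fin m → Fin k → ℤ) (q : Fin n → Fin k → ℤ)
    (a : Fin m → ℤ) (u : FreeGroup (Fin n)) :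
    (lift p q (ofAdd a, u)).toAdd = a ᵥ* Matrix.of p + abVec u ᵥ* Matrix.of q := by
  simp only [toAdd_lift_apply, vecMul_eq_sum]
  rfl

theorem exists_monoidHom_multiplicative_apply_eq_iff {k : ℕ} (a : Fin m → ℤ)
    (u : FreeGroup (Fin n)) (b : Fin k → ℤ) :
    (∃ χ : GFab m n →* Multiplicative (Fin k → ℤ), χ (ofAdd a, u) = ofAdd b) ↔
      ∃ (Q : Matrix (Fin m) (Fin k) ℤ) (P : Matrix (Fin n) (Fin k) ℤ),
        a ᵥ* Q + abVec u ᵥ* P = b := by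
  constructor
  · rintro ⟨χ, hχ⟩
    obtain ⟨p, q, rfl⟩ : ∃ p q, χ = lift p q := ⟨_, _, eq_lift χ⟩
    exact ⟨.of p, .of q, by rw [← toAdd_lift_apply_eq_vecMul, hχ, toAdd_ofAdd]⟩
  · rintro ⟨Q, P, h⟩
    refine ⟨lift (Matrix.of.symm Q) (Matrix.of.symm P), ?_⟩
    rw [← ofAdd_toAdd (lift _ _ _), toAdd_lift_apply_eq_vecMul]
    simpa using congrArg ofAdd h

theorem commute_ofAdd_one (a : Fin m → ℤ) (g : GFab m n) : Commute (ofAdd a, 1) g :=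
  Prod.ext (mul_comm _ _) (by simp)

theorem exists_monoidHom_freeGroup_apply_eq_iff (a : Fin m → ℤ) (u v : FreeGroup (Fin n)) :
    (∃ ψ : GFab m n →* FreeGroup (Fin n), ψ (ofAdd a, u) = v) ↔
      (∃ φ : FreeGroup (Fin n) →* FreeGroup (Fin n), φ u = v) ∨
        ∃ (w : FreeGroup (Fin n)) (l : Fin m → ℤ) (h : Fin n → ℤ),
          w ≠ 1 ∧ ¬ IsProperPower w ∧ l ≠ 0 ∧ v = w ^ (a ⬝ᵥ l + abVec u ⬝ᵥ h) := by
  constructor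
  · rintro ⟨ψ, rfl⟩
    by_cases hc : ψ (ofAdd a, 1) = 1
    · have hsplit : ((ofAdd a, u) : GFab m n) = (ofAdd a, 1) * (1, u) := by simp
      exact .inl ⟨ψ.comp (MonoidHom.inr _ _), by rw [hsplit, map_mul, hc, one_mul]; rfl⟩
    obtain ⟨w, hw⟩ := IsFreeGroup.exists_centralizer_eq_zpowers hc
    have hw1 : w ≠ 1 := by
      rintro rfl
      have hc_mem : ψ (ofAdd a, 1) ∈ zpowers 1 := hw ▸ mem_centralizer_singleton_iff.mpr rfl
      exact hc (by simpa using hc_mem)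
    have hmem (g : GFab m n) : ψ g ∈ zpowers w :=
      hw ▸ mem_centralizer_singleton_iff.mpr ((commute_ofAdd_one a g).symm.map ψ).eq
    obtain ⟨χ, hχ⟩ := exists_monoidHom_eq_zpow ψ hw1 hmem
    obtain ⟨l, h, rfl⟩ : ∃ l h, χ = lift l h := ⟨_, _, eq_lift χ⟩
    refine .inr ⟨w, l, h, hw1, not_isProperPower_of_centralizer_eq_zpowers hc hw, ?_, ?_⟩
    · rintro hl
      apply hc
      rw [hχ, toAdd_lift_apply_eq_dotProduct, hl]
      simp [abVec]
    · rw [hχ, toAdd_lift_apply_eq_dotProduct]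
  · rintro (⟨φ, rfl⟩ | ⟨w, l, h, -, -, -, rfl⟩)
    · exact ⟨φ.comp (MonoidHom.snd _ _), rfl⟩
    · refine ⟨(zpowersHom _ w).comp (lift l h), ?_⟩
      simp [← toAdd_lift_apply_eq_dotProduct]

end GFab

theorem whitehead_endo_general (m n : ℕ)
    (a b : Fin m → ℤ) (u v : FreeGroup (Fin n)) :
    (∃ Ψ : GFab m n →* GFab m n,
        Ψ (Multiplicative.ofAdd a, u) = (Multiplicative.ofAdd b, v)) ↔
    (((∃ φ : FreeGroup (Fin n) →* FreeGroup (Fin n), φ u = v) ∨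
      (∃ (w : FreeGroup (Fin n)) (l : Fin m → ℤ) (h : Fin n → ℤ),
        w ≠ 1 ∧ (¬ ∃ (z : FreeGroup (Fin n)) (k : ℕ), 2 ≤ k ∧ w = z ^ k) ∧ l ≠ 0 ∧
        v = w ^ (a ⬝ᵥ l + abVec u ⬝ᵥ h))) ∧
     (∃ (Q : Matrix (Fin m) (Fin m) ℤ) (P : Matrix (Fin n) (Fin m) ℤ),
        a ᵥ* Q + abVec u ᵥ* P = b)) := by
  rw [exists_monoidHom_prod_apply_eq_iff, and_comm]
  exact and_congr (GFab.exists_monoidHom_freeGroup_apply_eq_iff a u v)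
    (GFab.exists_monoidHom_multiplicative_apply_eq_iff a u b)

/-- Whitehead problem characterization for endomorphisms of `ℤ^m × F_n` (m ≥ 1, n ≥ 2):
some endomorphism sends `(a,u)` to `(b,v)` iff (1) either some endomorphism of `F_n`
sends u to v, or `v = w^(a·lᵀ + ū·hᵀ)` for some non-proper-power `w ≠ 1`, `l ≠ 0`
and h; and (2) there exist integer matrices Q, P with `aQ + ūP = b`. -/
theorem whitehead_endo (m n : ℕ) (hm : 1 ≤ m) (hn : 2 ≤ n)
    (a b : Fin m → ℤ) (u v : FreeGroup (Fin n)) :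
    (∃ Ψ : GFab m n →* GFab m n,
        Ψ (Multiplicative.ofAdd a, u) = (Multiplicative.ofAdd b, v)) ↔
    (((∃ φ : FreeGroup (Fin n) →* FreeGroup (Fin n), φ u = v) ∨
      (∃ (w : FreeGroup (Fin n)) (l : Fin m → ℤ) (h : Fin n → ℤ),
        w ≠ 1 ∧ (¬ ∃ (z : FreeGroup (Fin n)) (k : ℕ), 2 ≤ k ∧ w = z ^ k) ∧ l ≠ 0 ∧
        v = w ^ (a ⬝ᵥ l + abVec u ⬝ᵥ h))) ∧
     (∃ (Q : Matrix (Fin m) (Fin m) ℤ) (P : Matrix (Fin n) (Fin m) ℤ),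
        a ᵥ* Q + abVec u ᵥ* P = b)) :=
  whitehead_endo_general m n a b u v
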